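/- Let d ≥ 2 be an integer, K > 0 a rational number, and k an integer with 0 ≤ k ≤ d. Suppose rational numbers w, I, N satisfy: (i) d·w − K = I + N (degree additivity for the image and kernel of β), (ii) N ≤ (k/d)·(d·w − K) (slope semistability of the kernel, where k is its rank), and (iii) w + I ≤ 0 (Higgs semistability of W ⊕ Im β). If k < d, then w ≤ ((d−k)/(d−k+1))·(K/d). -/

import Mathlib

/-!
Additivity and the slope bound on the kernel give deg Im β ≥ ((d - k)/d)(d w - K), so Higgs
semistability yields w + ((d - k)/d)(d w - K) ≤ 0, i.e. (d - k + 1) w ≤ (d - k) K / d.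
-/

section DegreeInequality

variable {F : Type*} [Field F] [LinearOrder F] [IsStrictOrderedRing F] {d k K w I N : F}

theorem le_image_degree_of_kernel_slope_le (hd : d ≠ 0) (h1 : d * w - K = I + N)
    (h2 : N ≤ k / d * (d * w - K)) : (d - k) / d * (d * w - K) ≤ I := by
  have hsplit : (d - k) / d * (d * w - K) = (d * w - K) - k / d * (d * w - K) := by
    field_simp
  linarith

theorem mul_le_of_image_degree_le (hd : d ≠ 0) (hI : (d - k) / d * (d * w - K) ≤ I)
    (h3 : w + I ≤ 0) : (d - k + 1) * w ≤ (d - k) * (K / d) := by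
  have hexpand : (d - k) / d * (d * w - K) = (d - k) * w - (d - k) * (K / d) := by
    field_simp
  linarith

theorem le_of_kernel_slope_le (hd : 0 < d) (hkd : k < d) (h1 : d * w - K = I + N)
    (h2 : N ≤ k / d * (d * w - K)) (h3 : w + I ≤ 0) :
    w ≤ (d - k) / (d - k + 1) * (K / d) := by
  have hI := le_image_degree_of_kernel_slope_le hd.ne' h1 h2
  have hw := mul_le_of_image_degree_le hd.ne' hI h3
  rw [div_mul_eq_mul_div, le_div_iff₀ (by linarith), mul_comm]
  exact hw

end DegreeInequality

theorem su_p1_degree_inequality_general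
    (d k : ℕ) (hkd : k < d)
    (K w I N : ℚ)
    (h1 : (d : ℚ) * w - K = I + N)
    (h2 : N ≤ ((k : ℚ) / (d : ℚ)) * ((d : ℚ) * w - K))
    (h3 : w + I ≤ 0) :
    w ≤ (((d : ℚ) - k) / ((d : ℚ) - k + 1)) * (K / d) := by
  have hd : (0 : ℚ) < d := Nat.cast_pos.mpr (Nat.zero_lt_of_lt hkd)
  exact le_of_kernel_slope_le hd (by exact_mod_cast hkd) h1 h2 h3

theorem su_p1_degree_inequality
    (d k : ℕ) (hd : 2 ≤ d) (hk : k ≤ d) (hkd : k < d)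
    (K w I N : ℚ) (hK : 0 < K)
    (h1 : (d : ℚ) * w - K = I + N)
    (h2 : N ≤ ((k : ℚ) / (d : ℚ)) * ((d : ℚ) * w - K))
    (h3 : w + I ≤ 0) :
    w ≤ (((d : ℚ) - k) / ((d : ℚ) - k + 1)) * (K / d) :=
  su_p1_degree_inequality_general d k hkd K w I N h1 h2 h3
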